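/- Let G = Z_p^2 × Z_q with p, q distinct primes and S ⊆ G a spectral set with gcd(|G|, |S|) = 1 and |S| > 1 such that neither S nor its spectrum Λ is contained in a proper coset structure forcing earlier cases. Then a contradiction arises: some character of order pq vanishes on S, so by Lam–Leung |S| = kp + ℓq with k, ℓ ≥ 0, but 1 < |S| < q forces ℓ = 0 and p | |S|, contradicting gcd(|G|,|S|) = 1. Hence every spectral set S in G with gcd(|G|,|S|) = 1 satisfies |S| = 1. -/

import Mathlib

open Complex Finset

noncomputable def chiZp2 (p : ℕ) (a u : ZMod p × ZMod p) : ℂ :=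
  Complex.exp (2 * Real.pi * Complex.I * (((u.1 * a.1 + u.2 * a.2 : ZMod p).val : ℂ) / p))

noncomputable def chiG (p q : ℕ) (l x : (ZMod p × ZMod p) × ZMod q) : ℂ :=
  chiZp2 p l.1 x.1 *
    Complex.exp (2 * Real.pi * Complex.I * (((x.2 * l.2 : ZMod q).val : ℂ) / q))

def IsSpectrum (p q : ℕ) [NeZero p] [NeZero q]
    (S Λ : Finset ((ZMod p × ZMod p) × ZMod q)) : Prop :=
  Λ.card = S.card ∧ ∀ l ∈ Λ, ∀ l' ∈ Λ, l ≠ l' →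
    ∑ x ∈ S, chiG p q l x * (starRingEnd ℂ) (chiG p q l' x) = 0

def IsSpectral (p q : ℕ) [NeZero p] [NeZero q]
    (S : Finset ((ZMod p × ZMod p) × ZMod q)) : Prop :=
  ∃ Λ, IsSpectrum p q S Λ

def Tiles (p q : ℕ) [NeZero p] [NeZero q]
    (S : Finset ((ZMod p × ZMod p) × ZMod q)) : Prop :=
  ∃ T : Finset ((ZMod p × ZMod p) × ZMod q),
    S.card * T.card = Fintype.card ((ZMod p × ZMod p) × ZMod q) ∧
    ∀ g, ∃ s ∈ S, ∃ t ∈ T, s + t = g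

/-!
Write `e` for the standard additive characters of `ZMod p` and `ZMod q`. Two distinct elements
`l, l'` of a spectrum give a vanishing sum `∑_{x ∈ S} e(f x) e(g x) = 0` of `pq`-th roots of
unity. Applying the Galois automorphisms `ζ ↦ ζ ^ t`, `t` coprime to `pq`, and averaging (finite
Fourier inversion) shows: a vanishing sum of `p`-th roots of unity has all fibres of equal weight,
so `p ∣ #S`; hence `l ↦ l.2` is injective on the spectrum and `#S < q` (as `q ∤ #S`). For a mixed
sum with `#S < q`, averaging the twists `e(s f x)` over `s` leaves a relation among `q`-th roots
of unity whose coefficients must all agree with those of an empty fibre, which forces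
`#S = p · #{x ∈ S | f x = 0}`. So two distinct spectrum elements make `p ∣ #S`.
-/

open Polynomial ZMod

theorem IsPrimitiveRoot.sum_mul_pow_pow_eq_zero {ι : Type*} {ζ : ℂ} {n : ℕ}
    (hζ : IsPrimitiveRoot ζ n) (hn : 0 < n) {S : Finset ι} {c : ι → ℚ} {m : ι → ℕ}
    (h : ∑ x ∈ S, (c x : ℂ) * ζ ^ m x = 0) {t : ℕ} (ht : t.Coprime n) :
    ∑ x ∈ S, (c x : ℂ) * (ζ ^ t) ^ m x = 0 := by
  set P : ℚ[X] := ∑ x ∈ S, C (c x) * X ^ m x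
  have hP (z : ℂ) : aeval z P = ∑ x ∈ S, (c x : ℂ) * z ^ m x := by simp [P]
  have hminpoly : minpoly ℚ (ζ ^ t) = minpoly ℚ ζ := by
    rw [← cyclotomic_eq_minpoly_rat hζ hn,
      ← cyclotomic_eq_minpoly_rat (hζ.pow_of_coprime t ht) hn]
  rw [← hP, ← minpoly.dvd_iff, hminpoly, minpoly.dvd_iff, hP, h]

theorem Nat.Coprime.exists_natCast_eq {p q : ℕ} [NeZero p] [NeZero q] (hpq : p.Coprime q)
    (a : ZMod p) (b : ZMod q) : ∃ m : ℕ, (m : ZMod p) = a ∧ (m : ZMod q) = b := by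
  obtain ⟨m, hmp, hmq⟩ := Nat.chineseRemainder hpq a.val b.val
  refine ⟨m, ?_, ?_⟩
  · rw [(ZMod.natCast_eq_natCast_iff _ _ _).mpr hmp, natCast_zmod_val]
  · rw [(ZMod.natCast_eq_natCast_iff _ _ _).mpr hmq, natCast_zmod_val]

namespace ZMod

variable {ι : Type*}

section

variable {n : ℕ} [NeZero n]

theorem stdAddChar_natCast (m : ℕ) :
    stdAddChar (m : ZMod n) = stdAddChar (1 : ZMod n) ^ m := by
  rw [← AddChar.map_nsmul_eq_pow, nsmul_one]

theorem isPrimitiveRoot_stdAddChar_one : IsPrimitiveRoot (stdAddChar (1 : ZMod n)) n := by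
  have h := toCircle_natCast (N := n) 1
  rw [Nat.cast_one, Nat.cast_one, mul_one] at h
  rw [stdAddChar_apply, h]
  exact Complex.isPrimitiveRoot_exp n (NeZero.ne n)

theorem sum_mul_stdAddChar_mul_eq_zero {S : Finset ι} {c : ι → ℚ} {g : ι → ZMod n}
    (h : ∑ x ∈ S, (c x : ℂ) * stdAddChar (g x) = 0) {u : ZMod n} (hu : IsUnit u) :
    ∑ x ∈ S, (c x : ℂ) * stdAddChar (u * g x) = 0 := by
  have hval (a : ZMod n) : stdAddChar a = stdAddChar (1 : ZMod n) ^ a.val := by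
    rw [← stdAddChar_natCast, natCast_zmod_val]
  have hmul (a : ZMod n) :
      stdAddChar (u * a) = (stdAddChar (1 : ZMod n) ^ u.val) ^ a.val := by
    rw [← pow_mul, ← stdAddChar_natCast, Nat.cast_mul, natCast_zmod_val, natCast_zmod_val]
  rw [sum_congr rfl fun x _ => by rw [hmul]]
  refine isPrimitiveRoot_stdAddChar_one.sum_mul_pow_pow_eq_zero
    (Nat.pos_of_ne_zero (NeZero.ne n)) ?_ (val_coe_unit_coprime hu.unit)
  rw [← h]
  exact sum_congr rfl fun x _ => by rw [← hval]

end

variable {p : ℕ} [Fact p.Prime]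

theorem mul_sum_fiber_eq_sum_of_sum_mul_stdAddChar_eq_zero {S : Finset ι} {g : ι → ZMod p}
    {w : ι → ℚ} (h : ∑ x ∈ S, (w x : ℂ) * stdAddChar (g x) = 0) (j : ZMod p) :
    (p : ℚ) * ∑ x ∈ S with g x = j, w x = ∑ x ∈ S, w x := by
  have htwist (s : ZMod p) : ∑ x ∈ S, (w x : ℂ) * stdAddChar (s * g x) =
      if s = 0 then ∑ x ∈ S, (w x : ℂ) else 0 := by
    split_ifs with hs
    · simp [hs]
    · exact sum_mul_stdAddChar_mul_eq_zero h (Ne.isUnit hs)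
  have hortho (x : ι) : ∑ s : ZMod p, stdAddChar (s * (g x - j)) =
      if g x = j then (p : ℂ) else 0 := by
    rw [AddChar.sum_mulShift _ (isPrimitive_stdAddChar p)]
    simp [sub_eq_zero]
  suffices (((p : ℚ) * ∑ x ∈ S with g x = j, w x : ℚ) : ℂ) = ((∑ x ∈ S, w x : ℚ) : ℂ) by
    exact_mod_cast this
  calc ((p * ∑ x ∈ S with g x = j, w x : ℚ) : ℂ)
      = ∑ x ∈ S, (w x : ℂ) * ∑ s : ZMod p, stdAddChar (s * (g x - j)) := by
        simp only [hortho, mul_ite, mul_zero, ← sum_filter]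
        push_cast
        rw [mul_sum]
        exact sum_congr rfl fun x _ => mul_comm _ _
    _ = ∑ s : ZMod p, stdAddChar (-(s * j)) * ∑ x ∈ S, (w x : ℂ) * stdAddChar (s * g x) := by
        simp only [mul_sum]
        rw [sum_comm]
        refine sum_congr rfl fun s _ => sum_congr rfl fun x _ => ?_
        rw [mul_sub, sub_eq_add_neg, AddChar.map_add_eq_mul]
        ring
    _ = ((∑ x ∈ S, w x : ℚ) : ℂ) := by simp [htwist]

theorem prime_dvd_card_of_sum_stdAddChar_eq_zero {S : Finset ι} {f : ι → ZMod p}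
    (h : ∑ x ∈ S, stdAddChar (f x) = 0) : p ∣ #S := by
  have hfiber := mul_sum_fiber_eq_sum_of_sum_mul_stdAddChar_eq_zero (w := fun _ => 1)
    (by simpa using h) 0
  simp only [sum_const, nsmul_eq_mul, mul_one] at hfiber
  exact ⟨_, (Nat.cast_inj (R := ℚ)).mp (by push_cast; exact hfiber.symm)⟩

variable {q : ℕ} [Fact q.Prime]

theorem isPrimitiveRoot_stdAddChar_one_mul_stdAddChar_one (hpq : p ≠ q) :
    IsPrimitiveRoot (stdAddChar (1 : ZMod p) * stdAddChar (1 : ZMod q)) (p * q) := by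
  have hp := (isPrimitiveRoot_stdAddChar_one (n := p)).eq_orderOf
  have hq := (isPrimitiveRoot_stdAddChar_one (n := q)).eq_orderOf
  have hcop : p.Coprime q := (Nat.coprime_primes Fact.out Fact.out).mpr hpq
  rw [IsPrimitiveRoot.iff_orderOf,
    (Commute.all _ _).orderOf_mul_eq_mul_orderOf_of_coprime (hp ▸ hq ▸ hcop), ← hp, ← hq]

theorem sum_stdAddChar_mul_mul_stdAddChar_eq_zero (hpq : p ≠ q) {S : Finset ι}
    {f : ι → ZMod p} {g : ι → ZMod q} (h : ∑ x ∈ S, stdAddChar (f x) * stdAddChar (g x) = 0)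
    {s : ZMod p} (hs : s ≠ 0) : ∑ x ∈ S, stdAddChar (s * f x) * stdAddChar (g x) = 0 := by
  have hcop : p.Coprime q := (Nat.coprime_primes Fact.out Fact.out).mpr hpq
  have hpow (m : ℕ) : (stdAddChar (1 : ZMod p) * stdAddChar (1 : ZMod q)) ^ m =
      stdAddChar (m : ZMod p) * stdAddChar (m : ZMod q) := by
    rw [mul_pow, stdAddChar_natCast, stdAddChar_natCast]
  choose m hmp hmq using fun x => hcop.exists_natCast_eq (f x) (g x)
  -- the conjugation `ζ ↦ ζ ^ t` twists the `p`-part by `s` and fixes the `q`-part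
  obtain ⟨t, htp, htq⟩ := hcop.exists_natCast_eq s 1
  have ht : t.Coprime (p * q) := Nat.Coprime.mul_right
    ((isUnit_iff_coprime t p).mp (htp ▸ hs.isUnit)) ((isUnit_iff_coprime t q).mp (htq ▸ isUnit_one))
  have hζ := (isPrimitiveRoot_stdAddChar_one_mul_stdAddChar_one hpq).sum_mul_pow_pow_eq_zero
    (c := fun _ => 1) (m := m) (Nat.mul_pos (NeZero.pos p) (NeZero.pos q))
    (by simpa only [Rat.cast_one, one_mul, hpow, hmp, hmq] using h) ht
  rw [← hζ]
  refine sum_congr rfl fun x _ => ?_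
  rw [Rat.cast_one, one_mul, ← pow_mul, hpow, Nat.cast_mul, Nat.cast_mul, htp, htq, hmp, hmq,
    one_mul]

theorem prime_dvd_card_of_sum_stdAddChar_mul_stdAddChar_eq_zero (hpq : p ≠ q) {S : Finset ι}
    {f : ι → ZMod p} {g : ι → ZMod q} (h : ∑ x ∈ S, stdAddChar (f x) * stdAddChar (g x) = 0)
    (hS : #S < q) : p ∣ #S := by
  set w : ι → ℚ := fun x => (if f x = 0 then (p : ℚ) else 0) - 1
  have hortho (x : ι) : ∑ s : ZMod p, stdAddChar (s * f x) = if f x = 0 then (p : ℂ) else 0 := by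
    rw [AddChar.sum_mulShift _ (isPrimitive_stdAddChar p)]
    simp
  have hw : ∑ x ∈ S, (w x : ℂ) * stdAddChar (g x) = 0 := by
    calc ∑ x ∈ S, (w x : ℂ) * stdAddChar (g x)
        = ∑ s : ZMod p, ∑ x ∈ S, stdAddChar (s * f x) * stdAddChar (g x)
            - ∑ x ∈ S, stdAddChar (g x) := by
          simp only [w, sum_comm (s := univ), ← sum_mul, hortho, ← sum_sub_distrib]
          push_cast
          exact sum_congr rfl fun x _ => by split_ifs <;> push_cast <;> ring
      _ = 0 := by
          rw [Fintype.sum_eq_single 0 fun s hs =>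
            sum_stdAddChar_mul_mul_stdAddChar_eq_zero hpq h hs]
          simp
  obtain ⟨j, -, hj⟩ := exists_mem_notMem_of_card_lt_card (s := S.image g) (t := univ)
    (card_image_le.trans_lt (by rwa [card_univ, ZMod.card]))
  have hfiber := mul_sum_fiber_eq_sum_of_sum_mul_stdAddChar_eq_zero hw j
  rw [filter_false_of_mem fun x hx hgx => hj (mem_image.mpr ⟨x, hx, hgx⟩), sum_empty,
    mul_zero] at hfiber
  simp only [w, sum_sub_distrib] at hfiber
  rw [← sum_filter] at hfiber
  simp only [sum_const, nsmul_eq_mul, mul_one] at hfiber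
  have hcard : (#S : ℚ) = p * #{x ∈ S | f x = 0} := by linarith
  exact ⟨_, by exact_mod_cast hcard⟩

end ZMod

section spectral

variable {p q : ℕ}

theorem chiG_eq_stdAddChar [NeZero p] [NeZero q] (l x : (ZMod p × ZMod p) × ZMod q) :
    chiG p q l x = stdAddChar (x.1.1 * l.1.1 + x.1.2 * l.1.2) * stdAddChar (x.2 * l.2) := by
  simp only [chiG, chiZp2, stdAddChar_apply, toCircle_apply, mul_div_assoc]

theorem chiG_mul_conj_chiG [NeZero p] [NeZero q] (l l' x : (ZMod p × ZMod p) × ZMod q) :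
    chiG p q l x * starRingEnd ℂ (chiG p q l' x) = chiG p q (l - l') x := by
  simp only [chiG_eq_stdAddChar, map_mul, ← AddChar.map_neg_eq_conj, mul_mul_mul_comm,
    ← AddChar.map_add_eq_mul, Prod.fst_sub, Prod.snd_sub]
  congr 2 <;> ring

theorem IsSpectrum.sum_chiG_sub_eq_zero [NeZero p] [NeZero q]
    {S Λ : Finset ((ZMod p × ZMod p) × ZMod q)} (hΛ : IsSpectrum p q S Λ)
    {l l' : (ZMod p × ZMod p) × ZMod q} (hl : l ∈ Λ) (hl' : l' ∈ Λ) (hne : l ≠ l') :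
    ∑ x ∈ S, chiG p q (l - l') x = 0 := by
  rw [← hΛ.2 l hl l' hl' hne]
  exact sum_congr rfl fun x _ => (chiG_mul_conj_chiG l l' x).symm

variable [Fact p.Prime] [Fact q.Prime] {S Λ : Finset ((ZMod p × ZMod p) × ZMod q)}

theorem IsSpectrum.card_lt (hΛ : IsSpectrum p q S Λ) (hpS : ¬ p ∣ #S) (hqS : ¬ q ∣ #S) :
    #S < q := by
  have hinj : Set.InjOn Prod.snd (Λ : Set ((ZMod p × ZMod p) × ZMod q)) := by
    intro l hl l' hl' hsnd
    by_contra hne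
    refine hpS (prime_dvd_card_of_sum_stdAddChar_eq_zero
      (f := fun x => x.1.1 * (l - l').1.1 + x.1.2 * (l - l').1.2) ?_)
    rw [← hΛ.sum_chiG_sub_eq_zero hl hl' hne]
    refine sum_congr rfl fun x _ => ?_
    rw [chiG_eq_stdAddChar, Prod.snd_sub, hsnd, sub_self, mul_zero, AddChar.map_zero_eq_one,
      mul_one]
  have hle : #S ≤ q := by
    simpa [← hΛ.1, ZMod.card] using card_le_card_of_injOn Prod.snd (fun _ _ => mem_univ _) hinj
  exact hle.lt_of_ne fun heq => hqS (by simp [heq])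

theorem IsSpectrum.card_le_one (hpq : p ≠ q) (hΛ : IsSpectrum p q S Λ) (hpS : ¬ p ∣ #S)
    (hqS : ¬ q ∣ #S) : #S ≤ 1 := by
  by_contra! hS
  obtain ⟨l, hl, l', hl', hne⟩ := one_lt_card.mp (hΛ.1 ▸ hS)
  refine hpS (prime_dvd_card_of_sum_stdAddChar_mul_stdAddChar_eq_zero hpq
    (f := fun x => x.1.1 * (l - l').1.1 + x.1.2 * (l - l').1.2) (g := fun x => x.2 * (l - l').2)
    ?_ (hΛ.card_lt hpS hqS))
  rw [← hΛ.sum_chiG_sub_eq_zero hl hl' hne]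
  exact sum_congr rfl fun x _ => (chiG_eq_stdAddChar _ x).symm

end spectral

theorem coprime_spectral_is_singleton (p q : ℕ) [Fact p.Prime] [Fact q.Prime] (hpq : p ≠ q)
    (S : Finset ((ZMod p × ZMod p) × ZMod q)) (hS : IsSpectral p q S)
    (hgcd : Nat.gcd (Fintype.card ((ZMod p × ZMod p) × ZMod q)) S.card = 1) :
    S.card = 1 := by
  obtain ⟨Λ, hΛ⟩ := hS
  have hcardG : Fintype.card ((ZMod p × ZMod p) × ZMod q) = p * p * q := by simp [ZMod.card]
  have hnot_dvd {r : ℕ} (hr : r.Prime) (hrG : r ∣ p * p * q) : ¬ r ∣ #S :=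
    (Nat.Prime.coprime_iff_not_dvd hr).mp (Nat.Coprime.coprime_dvd_left (hcardG ▸ hrG) hgcd)
  have hpS := hnot_dvd Fact.out (dvd_mul_of_dvd_left (dvd_mul_right p p) q)
  have hqS := hnot_dvd Fact.out (dvd_mul_left q _)
  have hS0 : #S ≠ 0 := fun h0 => hpS (h0 ▸ dvd_zero p)
  have := hΛ.card_le_one hpq hpS hqS
  omega
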